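/- Suppose at time t: R(t) ∈ SO(3) with bᵢ = R(t) eᵢ, Ṙ(t) = R(t) Ω̂, ṗ(t) = v(t), v̇(t) = (f/m) b₃ − g e₃, and the constraints p̂ = −b₁, v₂ = ρ Ω₃, v₃ = −ρ Ω₂ hold at t (ρ = ‖p(t)‖ > 0). Then the function t' ↦ (b₂(t') ⋅ v(t'))/‖p(t')‖ is differentiable at t with derivative −Ω₁ Ω₂ − (g/ρ) s₂, and the function t' ↦ −(b₃(t') ⋅ v(t'))/‖p(t')‖ is differentiable at t with derivative Ω₁ Ω₃ + (1/ρ)(−f/m + g s₃), where s₂ = e₃ ⋅ b₂, s₃ = e₃ ⋅ b₃, Ωᵢ = eᵢ ⋅ Ω, vᵢ = bᵢ ⋅ v(t). -/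

import Mathlib

open Matrix

/-- Standard basis vectors of `ℝ³ = Fin 3 → ℝ` (so `e 0 = e₁`, `e 1 = e₂`, `e 2 = e₃`). -/
def e (i : Fin 3) : Fin 3 → ℝ := Pi.single i 1

/-- `SO(3)`: real 3×3 matrices with `RᵀR = I` and `det R = 1`. -/
def SO3 (R : Matrix (Fin 3) (Fin 3) ℝ) : Prop := Rᵀ * R = 1 ∧ R.det = 1

/-- The Euclidean norm on `ℝ³ = Fin 3 → ℝ`. -/
noncomputable def enorm3 (x : Fin 3 → ℝ) : ℝ := Real.sqrt (x ⬝ᵥ x)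

/-- The hat map: `hat Ω` is the skew-symmetric matrix with `(hat Ω) y = Ω × y`. -/
def hat (Ω : Fin 3 → ℝ) : Matrix (Fin 3) (Fin 3) ℝ :=
  !![0, -Ω 2, Ω 1; Ω 2, 0, -Ω 0; -Ω 1, Ω 0, 0]

attribute [local instance] Matrix.normedAddCommGroup Matrix.normedSpace

/-!
Write `bᵢ = R eᵢ` and `V = Rᵀ v`, so that `Vᵢ = bᵢ ⋅ v`. Since `Ṙ = R Ω̂`, the numerators satisfy
`d/dt (bᵢ ⋅ v) = (Ω × eᵢ) ⋅ V + bᵢ ⋅ v̇`, and orthonormality of the `bᵢ` evaluates `bᵢ ⋅ b₃`.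
The pointing constraint `p = −ρ b₁` gives `ρ̇ = p̂ ⋅ v = −V₁`. In the quotient rule the terms in
`V₁` then cancel exactly by the velocity constraints `V₂ = ρ Ω₃` and `V₃ = −ρ Ω₂`.
-/

section Calculus

variable {𝕜 : Type*} [NontriviallyNormedField 𝕜] {m n : Type*} [Fintype n] {t : 𝕜}

theorem HasDerivAt.dotProduct {x y : 𝕜 → n → 𝕜} {x' y' : n → 𝕜}
    (hx : HasDerivAt x x' t) (hy : HasDerivAt y y' t) :
    HasDerivAt (fun s => x s ⬝ᵥ y s) (x' ⬝ᵥ y t + x t ⬝ᵥ y') t :=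
  (HasDerivAt.fun_sum fun i _ => (hasDerivAt_pi.1 hx i).fun_mul (hasDerivAt_pi.1 hy i)).congr_deriv
    Finset.sum_add_distrib

theorem HasDerivAt.mulVec_const {A : 𝕜 → Matrix m n 𝕜} {A' : Matrix m n 𝕜}
    (hA : HasDerivAt A A' t) (u : n → 𝕜) :
    HasDerivAt (fun s => A s *ᵥ u) (A' *ᵥ u) t :=
  hasDerivAt_pi.2 fun i => HasDerivAt.fun_sum fun j _ =>
    (hasDerivAt_pi.1 (hasDerivAt_pi.1 hA i) j).mul_const (u j)

end Calculus

theorem hasDerivAt_enorm3 {p : ℝ → Fin 3 → ℝ} {p' : Fin 3 → ℝ} {t : ℝ}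
    (hp : HasDerivAt p p' t) (hp0 : p t ≠ 0) :
    HasDerivAt (fun s => enorm3 (p s)) (((enorm3 (p t))⁻¹ • p t) ⬝ᵥ p') t := by
  refine ((hp.dotProduct hp).sqrt (dotProduct_self_eq_zero.not.2 hp0)).congr_deriv ?_
  rw [dotProduct_comm p', ← two_mul, smul_dotProduct, smul_eq_mul, enorm3]
  field_simp

theorem mulVec_dotProduct_mulVec_of_transpose_mul_self {α : Type*} [CommSemiring α]
    {n : Type*} [Fintype n] [DecidableEq n] {R : Matrix n n α} (hR : Rᵀ * R = 1) (x y : n → α) :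
    (R *ᵥ x) ⬝ᵥ (R *ᵥ y) = x ⬝ᵥ y := by
  rw [dotProduct_comm, dotProduct_mulVec, ← mulVec_transpose, mulVec_mulVec, hR, one_mulVec,
    dotProduct_comm]

theorem mulVec_e_dotProduct (R : Matrix (Fin 3) (Fin 3) ℝ) (i : Fin 3) (w : Fin 3 → ℝ) :
    (R *ᵥ e i) ⬝ᵥ w = (w ᵥ* R) i := by
  rw [dotProduct_comm, dotProduct_mulVec, e, dotProduct_single, mul_one]

theorem hat_mulVec (Ω y : Fin 3 → ℝ) : hat Ω *ᵥ y = Ω ⨯₃ y := by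
  ext i
  fin_cases i <;> simp [hat, cross_apply, mulVec, dotProduct, Fin.sum_univ_three] <;> ring

theorem hasDerivAt_mulVec_dotProduct_of_hat {R : ℝ → Matrix (Fin 3) (Fin 3) ℝ}
    {v : ℝ → Fin 3 → ℝ} {Ω a : Fin 3 → ℝ} {t : ℝ}
    (hR : HasDerivAt R (R t * hat Ω) t) (hv : HasDerivAt v a t) (u : Fin 3 → ℝ) :
    HasDerivAt (fun s => (R s *ᵥ u) ⬝ᵥ v s) ((Ω ⨯₃ u) ⬝ᵥ (v t ᵥ* R t) + (R t *ᵥ u) ⬝ᵥ a) t := by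
  refine ((hR.mulVec_const u).dotProduct hv).congr_deriv ?_
  rw [← mulVec_mulVec, hat_mulVec, dotProduct_comm, dotProduct_mulVec, dotProduct_comm]

theorem required_angular_accelerations_general (m g f : ℝ)
    (R : ℝ → Matrix (Fin 3) (Fin 3) ℝ) (p v : ℝ → Fin 3 → ℝ) (Ω : Fin 3 → ℝ) (t : ℝ)
    (hSO : SO3 (R t))
    (hR : HasDerivAt R (R t * hat Ω) t)
    (hp : HasDerivAt p (v t) t)
    (hv : HasDerivAt v ((f / m) • (R t *ᵥ e 2) - g • e 2) t)
    (hρ : 0 < enorm3 (p t))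
    (hpoint : (enorm3 (p t))⁻¹ • p t = -(R t *ᵥ e 0))
    (hc2 : (R t *ᵥ e 1) ⬝ᵥ v t = enorm3 (p t) * (e 2 ⬝ᵥ Ω))
    (hc3 : (R t *ᵥ e 2) ⬝ᵥ v t = -(enorm3 (p t) * (e 1 ⬝ᵥ Ω))) :
    HasDerivAt (fun s => ((R s *ᵥ e 1) ⬝ᵥ v s) / enorm3 (p s))
      (-((e 0 ⬝ᵥ Ω) * (e 1 ⬝ᵥ Ω)) - (g / enorm3 (p t)) * (e 2 ⬝ᵥ (R t *ᵥ e 1))) t ∧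
    HasDerivAt (fun s => -(((R s *ᵥ e 2) ⬝ᵥ v s) / enorm3 (p s)))
      ((e 0 ⬝ᵥ Ω) * (e 2 ⬝ᵥ Ω) +
        (1 / enorm3 (p t)) * (-(f / m) + g * (e 2 ⬝ᵥ (R t *ᵥ e 2)))) t := by
  have hp0 : p t ≠ 0 := by
    rintro h
    simp [enorm3, h] at hρ
  have hΩ (i : Fin 3) : e i ⬝ᵥ Ω = Ω i := by rw [dotProduct_comm, e, dotProduct_single, mul_one]
  have hcross (w : Fin 3 → ℝ) :
      (Ω ⨯₃ e 1) ⬝ᵥ w = Ω 0 * w 2 - Ω 2 * w 0 ∧ (Ω ⨯₃ e 2) ⬝ᵥ w = Ω 1 * w 0 - Ω 0 * w 1 := by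
    constructor <;> simp [e, cross_apply, dotProduct, Fin.sum_univ_three] <;> ring
  have he : e 1 ⬝ᵥ e 2 = 0 ∧ e 2 ⬝ᵥ e 2 = 1 := by simp [e]
  have hb (i j : Fin 3) : (R t *ᵥ e i) ⬝ᵥ (R t *ᵥ e j) = e i ⬝ᵥ e j :=
    mulVec_dotProduct_mulVec_of_transpose_mul_self hSO.1 _ _
  rw [mulVec_e_dotProduct, hΩ] at hc2 hc3
  have hρ' := hasDerivAt_enorm3 hp hp0
  rw [hpoint, neg_dotProduct, mulVec_e_dotProduct] at hρ'
  have hN (i : Fin 3) := hasDerivAt_mulVec_dotProduct_of_hat hR hv (e i)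
  simp only [dotProduct_sub, dotProduct_smul, hb, smul_eq_mul] at hN
  constructor
  · refine ((hN 1).fun_div hρ' hρ.ne').congr_deriv ?_
    simp only [(hcross _).1, he.1, dotProduct_comm (e 2) (R t *ᵥ _), mulVec_e_dotProduct, hΩ,
      hc2, hc3]
    field_simp
    ring
  · refine ((hN 2).fun_div hρ' hρ.ne').neg.congr_deriv ?_
    simp only [(hcross _).2, he.2, dotProduct_comm (e 2) (R t *ᵥ _), mulVec_e_dotProduct, hΩ,
      hc2, hc3]
    field_simp
    ring

/-- On-manifold required angular accelerations: under `Ṙ = R Ω̂`, `ṗ = v`,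
`v̇ = (f/m) b₃ − g e₃` and the constraints `p̂ = −b₁`, `v₂ = ρ Ω₃`, `v₃ = −ρ Ω₂`,
`d/dt (v₂/ρ) = −Ω₁ Ω₂ − (g/ρ) s₂` and `d/dt (−v₃/ρ) = Ω₁ Ω₃ + (1/ρ)(−f/m + g s₃)`. -/
theorem required_angular_accelerations (m g f : ℝ) (hm : 0 < m) (hg : 0 < g)
    (R : ℝ → Matrix (Fin 3) (Fin 3) ℝ) (p v : ℝ → Fin 3 → ℝ) (Ω : Fin 3 → ℝ) (t : ℝ)
    (hSO : SO3 (R t))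
    (hR : HasDerivAt R (R t * hat Ω) t)
    (hp : HasDerivAt p (v t) t)
    (hv : HasDerivAt v ((f / m) • (R t *ᵥ e 2) - g • e 2) t)
    (hρ : 0 < enorm3 (p t))
    (hpoint : (enorm3 (p t))⁻¹ • p t = -(R t *ᵥ e 0))
    (hc2 : (R t *ᵥ e 1) ⬝ᵥ v t = enorm3 (p t) * (e 2 ⬝ᵥ Ω))
    (hc3 : (R t *ᵥ e 2) ⬝ᵥ v t = -(enorm3 (p t) * (e 1 ⬝ᵥ Ω))) :
    HasDerivAt (fun s => ((R s *ᵥ e 1) ⬝ᵥ v s) / enorm3 (p s))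
      (-((e 0 ⬝ᵥ Ω) * (e 1 ⬝ᵥ Ω)) - (g / enorm3 (p t)) * (e 2 ⬝ᵥ (R t *ᵥ e 1))) t ∧
    HasDerivAt (fun s => -(((R s *ᵥ e 2) ⬝ᵥ v s) / enorm3 (p s)))
      ((e 0 ⬝ᵥ Ω) * (e 2 ⬝ᵥ Ω) +
        (1 / enorm3 (p t)) * (-(f / m) + g * (e 2 ⬝ᵥ (R t *ᵥ e 2)))) t :=
  required_angular_accelerations_general m g f R p v Ω t hSO hR hp hv hρ hpoint hc2 hc3
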